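/- arXiv:2502.00484 — 9 statements merged into one kernel-verified Lean document; each statement's English description precedes it below -/
import Mathlib

section
/- For any finite set N of n agents, each with a demand vector in [0,1]^m, there exists an agent d ∈ N whose demand vector τ-covers the demand vectors of at least (n+1)/2 agents of N, where τ-covering means being coordinatewise at least as large on at least m/2 coordinates. -/
/-- Some agent's demand vector τ-covers (is at least as large on at least `m/2`
coordinates as) the demand vectors of at least `(n+1)/2` agents. -/
theorem stmt_1 (n m : ℕ) (hn : 0 < n) (d : Fin n → Fin m → ℝ)
    (hd : ∀ i j, 0 ≤ d i j ∧ d i j ≤ 1) :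
    ∃ i : Fin n,
      n + 1 ≤ 2 * (Finset.univ.filter fun k : Fin n =>
        m ≤ 2 * (Finset.univ.filter fun j => d k j ≤ d i j).card).card := by
  set R : Fin n → Fin n → Prop :=
    fun i k => m ≤ 2 * (Finset.univ.filter fun j => d k j ≤ d i j).card with hR
  have hRdec : DecidablePred fun p : Fin n × Fin n => R p.1 p.2 := by
    intro p; unfold R; infer_instance
  have hrefl : ∀ i : Fin n, R i i := by
    intro i
    have : (Finset.univ.filter fun j => d i j ≤ d i j) = Finset.univ := by
      simp
    simp only [hR, this, Finset.card_univ, Fintype.card_fin]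
    omega
  have htot : ∀ i k : Fin n, R i k ∨ R k i := by
    intro i k
    have hcov : (Finset.univ.filter fun j => d k j ≤ d i j) ∪
        (Finset.univ.filter fun j => d i j ≤ d k j) = Finset.univ := by
      ext j
      simp [le_total]
    have hle := Finset.card_union_le (Finset.univ.filter fun j => d k j ≤ d i j)
      (Finset.univ.filter fun j => d i j ≤ d k j)
    rw [hcov, Finset.card_univ, Fintype.card_fin] at hle
    simp only [hR]
    omega
  by_contra hcon
  push_neg at hcon
  set f : Fin n → ℕ :=
    fun i => (Finset.univ.filter fun k : Fin n => R i k).card with hf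
  have hsum : ∀ i : Fin n, f i = ∑ k : Fin n, if R i k then 1 else 0 := by
    intro i
    simp only [hf]; rw [Finset.card_filter]
  have key : n * n + n ≤ 2 * ∑ i : Fin n, f i := by
    have h1 : 2 * ∑ i : Fin n, f i
        = ∑ i : Fin n, ∑ k : Fin n, ((if R i k then 1 else 0) + (if R k i then 1 else 0)) := by
      simp only [Finset.sum_add_distrib]
      rw [Finset.sum_comm (s := Finset.univ) (t := Finset.univ)
        (f := fun i k => if R k i then (1:ℕ) else 0)]
      simp only [hsum]
      ring
    rw [h1]
    have h2 : ∀ i k : Fin n,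
        (if i = k then 2 else 1) ≤ (if R i k then (1:ℕ) else 0) + (if R k i then 1 else 0) := by
      intro i k
      by_cases hik : i = k
      · subst hik; simp [hrefl i]
      · rcases htot i k with h | h <;> simp [hik, h] <;> omega
    calc n * n + n = ∑ i : Fin n, ∑ k : Fin n, (if i = k then 2 else 1) := by
          have he : ∀ i : Fin n, ∑ k : Fin n, (if i = k then (2:ℕ) else 1) = n + 1 := by
            intro i
            have : ∀ k : Fin n, (if i = k then (2:ℕ) else 1) = (if i = k then 1 else 0) + 1 := by
              intro k; split <;> simp
            simp only [this, Finset.sum_add_distrib, Finset.sum_ite_eq, Finset.mem_univ,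
              if_true, Finset.sum_const, Finset.card_univ, Fintype.card_fin, smul_eq_mul, mul_one]
            omega
          simp only [he, Finset.sum_const, Finset.card_univ, Fintype.card_fin, smul_eq_mul]
          ring
      _ ≤ _ := Finset.sum_le_sum fun i _ => Finset.sum_le_sum fun k _ => h2 i k
  have hub : ∑ i : Fin n, f i * 2 ≤ n * n := by
    calc ∑ i : Fin n, f i * 2 ≤ ∑ _i : Fin n, n :=
          Finset.sum_le_sum fun i _ => by have := hcon i; simp only [hf, hR] at *; omega
      _ = n * n := by simp [Finset.sum_const, mul_comm]
  have : 2 * ∑ i : Fin n, f i = ∑ i : Fin n, f i * 2 := by rw [Finset.mul_sum]; ring_nf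
  omega
end

section
/- Let x ∈ [0,1]^m be a solution and S a set of agents each satisfied by x (with threshold τ). Then there exists a solution z with z_j ∈ {0} ∪ {dⁱ_j : i ∈ N} for every j, Σ_j z_j ≤ Σ_j x_j, and every agent of S is satisfied by z. -/
/-- From a solution `x` satisfying a set `S` of agents, one can build a solution `z`
whose coordinates are either 0 or some agent's demand, which satisfies `S` as well,
and whose total value does not exceed that of `x`. -/
theorem stmt_3 (n m τ : ℕ) (d : Fin n → Fin m → ℝ)
    (hd : ∀ i j, 0 ≤ d i j ∧ d i j ≤ 1)
    (x : Fin m → ℝ) (hx : ∀ j, 0 ≤ x j ∧ x j ≤ 1)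
    (S : Finset (Fin n))
    (hS : ∀ i ∈ S, τ ≤ (Finset.univ.filter fun j => d i j ≤ x j).card) :
    ∃ z : Fin m → ℝ,
      (∀ j, z j = 0 ∨ ∃ i : Fin n, z j = d i j) ∧
      (∑ j, z j ≤ ∑ j, x j) ∧
      ∀ i ∈ S, τ ≤ (Finset.univ.filter fun j => d i j ≤ z j).card := by
  set T : Fin m → Finset ℝ :=
    fun j => insert 0 ((Finset.univ.image fun i => d i j).filter (· ≤ x j)) with hT
  have hne : ∀ j, (T j).Nonempty := fun j => ⟨0, Finset.mem_insert_self _ _⟩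
  refine ⟨fun j => (T j).max' (hne j), ?_, ?_, ?_⟩
  · intro j
    have := (T j).max'_mem (hne j)
    simp only [hT] at this
    simp only [Finset.mem_insert, Finset.mem_filter, Finset.mem_image] at this
    rcases this with h | ⟨⟨i, _, hi⟩, _⟩
    · exact Or.inl h
    · exact Or.inr ⟨i, hi.symm⟩
  · apply Finset.sum_le_sum
    intro j _
    apply Finset.max'_le
    intro y hy
    simp only [hT] at hy
    simp only [Finset.mem_insert, Finset.mem_filter] at hy
    rcases hy with h | ⟨_, h⟩
    · exact h ▸ (hx j).1
    · exact h
  · intro i hi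
    refine le_trans (hS i hi) (Finset.card_le_card ?_)
    intro j hj
    simp only [Finset.mem_filter, Finset.mem_univ, true_and] at hj ⊢
    apply Finset.le_max'
    simp only [hT]
    simp only [Finset.mem_insert, Finset.mem_filter, Finset.mem_image]
    exact Or.inr ⟨⟨i, Finset.mem_univ i, rfl⟩, hj⟩
end

section
/- Consider two agents with demand vectors a, b ∈ [0,1]^4 with Σ_j a_j ≤ 1 and Σ_j b_j ≤ 1. Then there exists x ∈ [0,1]^4 with Σ_j x_j ≤ 1 such that x_j ≥ a_j for at least 3 coordinates j and x_j ≥ b_j for at least 3 coordinates j. -/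
/-- For 2 agents and 4 projects, with τ = 3 = m-1, there is always a budget-feasible
solution satisfying both agents. -/
theorem stmt_4 (a b : Fin 4 → ℝ)
    (ha : ∀ j, 0 ≤ a j ∧ a j ≤ 1) (hb : ∀ j, 0 ≤ b j ∧ b j ≤ 1)
    (hasum : ∑ j, a j ≤ 1) (hbsum : ∑ j, b j ≤ 1) :
    ∃ x : Fin 4 → ℝ, (∀ j, 0 ≤ x j ∧ x j ≤ 1) ∧ (∑ j, x j ≤ 1) ∧
      3 ≤ (Finset.univ.filter fun j => a j ≤ x j).card ∧
      3 ≤ (Finset.univ.filter fun j => b j ≤ x j).card := by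
  by_cases hab : ∀ j, a j ≤ b j
  · refine ⟨b, hb, hbsum, ?_, ?_⟩ <;>
    · rw [Finset.filter_true_of_mem (fun j _ => by simpa using hab j)]
      simp
  by_cases hba : ∀ j, b j ≤ a j
  · refine ⟨a, ha, hasum, ?_, ?_⟩ <;>
    · rw [Finset.filter_true_of_mem (fun j _ => by simpa using hba j)]
      simp
  push_neg at hab hba
  obtain ⟨jw, hjw⟩ := hab
  obtain ⟨jv, hjv⟩ := hba
  obtain ⟨j0, -, hP⟩ := Finset.exists_max_image (Finset.univ : Finset (Fin 4))
    (fun j => a j - b j) ⟨0, Finset.mem_univ 0⟩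
  obtain ⟨j1, -, hQ⟩ := Finset.exists_max_image (Finset.univ : Finset (Fin 4))
    (fun j => b j - a j) ⟨0, Finset.mem_univ 0⟩
  have hP0 : b j0 < a j0 := by have := hP jw (Finset.mem_univ _); linarith [this]
  have hQ0 : a j1 < b j1 := by have := hQ jv (Finset.mem_univ _); linarith [this]
  have hne : j0 ≠ j1 := by intro h; subst h; linarith
  refine ⟨fun j => if j = j0 then b j0 else if j = j1 then a j1 else max (a j) (b j),
    ?_, ?_, ?_, ?_⟩
  · intro j
    dsimp only
    split_ifs
    · exact hb j0
    · exact ha j1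
    · exact ⟨le_trans (ha j).1 (le_max_left _ _), max_le (ha j).2 (hb j).2⟩
  · have p0 := hP 0 (Finset.mem_univ _); have p1 := hP 1 (Finset.mem_univ _)
    have p2 := hP 2 (Finset.mem_univ _); have p3 := hP 3 (Finset.mem_univ _)
    have q0 := hQ 0 (Finset.mem_univ _); have q1 := hQ 1 (Finset.mem_univ _)
    have q2 := hQ 2 (Finset.mem_univ _); have q3 := hQ 3 (Finset.mem_univ _)
    rw [Fin.sum_univ_four] at hasum hbsum ⊢
    have h4 : ∀ j : Fin 4, j = 0 ∨ j = 1 ∨ j = 2 ∨ j = 3 := by decide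
    rcases h4 j0 with rfl | rfl | rfl | rfl <;> rcases h4 j1 with rfl | rfl | rfl | rfl <;>
      first
      | exact absurd rfl hne
      | · simp (config := { decide := true }) only [Fin.isValue, if_true, if_false,
            ite_true, ite_false] at *
          rcases le_total (a 0) (b 0) with h0 | h0 <;>
          rcases le_total (a 1) (b 1) with h1 | h1 <;>
          rcases le_total (a 2) (b 2) with h2 | h2 <;>
          rcases le_total (a 3) (b 3) with h3 | h3 <;>
          simp only [max_eq_left, max_eq_right, h0, h1, h2, h3] <;>
          linarith
  · have hsub : Finset.univ.erase j0 ⊆ Finset.univ.filter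
        (fun j => a j ≤ if j = j0 then b j0 else if j = j1 then a j1 else max (a j) (b j)) := by
      intro j hj
      rw [Finset.mem_erase] at hj
      rw [Finset.mem_filter]
      refine ⟨Finset.mem_univ _, ?_⟩
      rw [if_neg hj.1]
      split_ifs with h
      · subst h; exact le_refl _
      · exact le_max_left _ _
    calc (3:ℕ) = (Finset.univ.erase j0).card := by
          rw [Finset.card_erase_of_mem (Finset.mem_univ _)]; simp
      _ ≤ _ := Finset.card_le_card hsub
  · have hsub : Finset.univ.erase j1 ⊆ Finset.univ.filter
        (fun j => b j ≤ if j = j0 then b j0 else if j = j1 then a j1 else max (a j) (b j)) := by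
      intro j hj
      rw [Finset.mem_erase] at hj
      rw [Finset.mem_filter]
      refine ⟨Finset.mem_univ _, ?_⟩
      split_ifs with h h'
      · subst h; exact le_refl _
      · exact absurd h' hj.1
      · exact le_max_right _ _
    calc (3:ℕ) = (Finset.univ.erase j1).card := by
          rw [Finset.card_erase_of_mem (Finset.mem_univ _)]; simp
      _ ≤ _ := Finset.card_le_card hsub
end

section
/- Let m be a positive integer with m > 2, and consider n = m agents on m projects where agent i demands 1/2 on projects i and i+1 (indices mod m) and 0 elsewhere. Then any x ∈ [0,1]^m with Σ_j x_j ≤ 1 satisfies (with τ = m−1) at most 4 agents. -/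
/-- In the cyclic instance with `m` agents on `m` projects (`m > 2`), where agent `i`
demands `1/2` on projects `i` and `i+1` (mod `m`) and `0` elsewhere, any budget-feasible
solution satisfies (at τ = m-1) at most 4 agents. -/
theorem stmt_8 (m : ℕ) (hm : 2 < m) (d : Fin m → Fin m → ℝ)
    (hd : ∀ i j : Fin m, d i j = if (j : ℕ) = (i : ℕ) ∨ (j : ℕ) = ((i : ℕ) + 1) % m then (1 : ℝ) / 2 else 0)
    (x : Fin m → ℝ) (hx : ∀ j, 0 ≤ x j ∧ x j ≤ 1) (hxsum : ∑ j, x j ≤ 1) :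
    (Finset.univ.filter fun i : Fin m =>
      m - 1 ≤ (Finset.univ.filter fun j => d i j ≤ x j).card).card ≤ 4 := by
  classical
  haveI : NeZero m := ⟨by omega⟩
  have hone : ((1 : Fin m) : ℕ) = 1 := by
    simp [Fin.val_one', Nat.mod_eq_of_lt (by omega : 1 < m)]
  have hadd : ∀ i : Fin m, ((i + 1 : Fin m) : ℕ) = (i.val + 1) % m := by
    intro i; rw [Fin.add_def]; simp [hone]
  set S : Finset (Fin m) := Finset.univ.filter (fun j => (1:ℝ)/2 ≤ x j) with hSdef
  have hmem : ∀ j : Fin m, j ∈ S ↔ (1:ℝ)/2 ≤ x j := by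
    intro j; simp [hSdef]
  have hScard : S.card ≤ 2 := by
    by_contra h
    push_neg at h
    have h3 : 3 ≤ S.card := h
    have h3' : (3:ℝ) ≤ (S.card : ℝ) := by exact_mod_cast h3
    have hsum : (S.card : ℝ) * ((1:ℝ)/2) ≤ ∑ j ∈ S, x j := by
      have := Finset.card_nsmul_le_sum S x ((1:ℝ)/2) (fun j hj => (hmem j).1 hj)
      simpa [nsmul_eq_mul] using this
    have hle : ∑ j ∈ S, x j ≤ ∑ j, x j :=
      Finset.sum_le_sum_of_subset_of_nonneg (Finset.subset_univ S)
        (fun j _ _ => (hx j).1)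
    nlinarith
  have hne : ∀ i : Fin m, i + 1 ≠ i := by
    intro i h
    have hv : (i.val + 1) % m = i.val := by
      have := congrArg Fin.val h
      rwa [hadd] at this
    rcases lt_or_ge (i.val + 1) m with h1 | h1
    · rw [Nat.mod_eq_of_lt h1] at hv; omega
    · have h2 : i.val + 1 = m := by omega
      rw [h2, Nat.mod_self] at hv
      omega
  have key : ∀ i : Fin m,
      m - 1 ≤ (Finset.univ.filter fun j => d i j ≤ x j).card → i ∈ S ∨ (i + 1) ∈ S := by
    intro i hi
    by_contra hcon
    push_neg at hcon
    have h1 : x i < 1/2 := by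
      have := hcon.1; rw [hmem] at this; linarith [not_le.mp this]
    have h2 : x (i + 1) < 1/2 := by
      have := hcon.2; rw [hmem] at this; linarith [not_le.mp this]
    set A := Finset.univ.filter fun j => d i j ≤ x j with hA
    have hiA : i ∉ A := by
      simp only [hA, Finset.mem_filter, Finset.mem_univ, true_and, not_le]
      rw [hd]; simp; linarith
    have hi1A : (i + 1) ∉ A := by
      simp only [hA, Finset.mem_filter, Finset.mem_univ, true_and, not_le]
      rw [hd, if_pos (Or.inr (hadd i))]
      linarith
    have hsub : A ⊆ (Finset.univ.erase i).erase (i + 1) := by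
      intro j hj
      refine Finset.mem_erase.mpr ⟨?_, Finset.mem_erase.mpr ⟨?_, Finset.mem_univ j⟩⟩
      · rintro rfl; exact hi1A hj
      · rintro rfl; exact hiA hj
    have hc := Finset.card_le_card hsub
    have hE : ((Finset.univ.erase i).erase (i + 1)).card = m - 2 := by
      rw [Finset.card_erase_of_mem, Finset.card_erase_of_mem (Finset.mem_univ i)]
      · simp only [Finset.card_univ, Fintype.card_fin]; omega
      · exact Finset.mem_erase.mpr ⟨hne i, Finset.mem_univ _⟩
    rw [hE] at hc
    omega
  have hsub : (Finset.univ.filter fun i : Fin m =>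
      m - 1 ≤ (Finset.univ.filter fun j => d i j ≤ x j).card)
      ⊆ S ∪ S.image (fun j => j - 1) := by
    intro i hi
    rw [Finset.mem_filter] at hi
    rcases key i hi.2 with h | h
    · exact Finset.mem_union_left _ h
    · refine Finset.mem_union_right _ (Finset.mem_image.mpr ⟨i + 1, h, ?_⟩)
      simp
  calc (Finset.univ.filter fun i : Fin m =>
      m - 1 ≤ (Finset.univ.filter fun j => d i j ≤ x j).card).card
      ≤ (S ∪ S.image (fun j => j - 1)).card := Finset.card_le_card hsub
    _ ≤ S.card + (S.image (fun j => j - 1)).card := Finset.card_union_le _ _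
    _ ≤ S.card + S.card := Nat.add_le_add le_rfl Finset.card_image_le
    _ ≤ 4 := by omega
end

section
/- Let d_1 ≥ d_2 ≥ ... ≥ d_p ≥ 0 be reals with Σ_i d_i ≥ b, and suppose d_1 ≤ b/2. Partition the indices alternately (odd indices into J₁, even into J₂). Then Σ_{i∈J₁} d_i ≥ b/4 and Σ_{i∈J₂} d_i ≥ b/4. -/
/-!
Write `E` and `O` for the sums of `d` over the even and the odd indices. Shifting each index down
by one compares the two sums term by term: since `d` is non-increasing, `d (2k+1) ≤ d (2k)` gives
`O ≤ E`, and `d (2k+2) ≤ d (2k+1)` gives `E ≤ d 0 + O`. With `E + O ≥ b` and `d 0 ≤ b/2` this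
forces `2 O ≥ b - d 0 ≥ b/2`, and then `E ≥ O ≥ b/4`.
-/

open Finset

section OrderedSum

variable {ι κ M : Type*} [AddCommMonoid M] [PartialOrder M] [IsOrderedAddMonoid M]

theorem Finset.sum_le_sum_of_injOn_of_nonneg {s : Finset ι} {t : Finset κ} {f : ι → M}
    {g : κ → M} (e : ι → κ) (he : Set.InjOn e s) (hest : Set.MapsTo e s t)
    (hfg : ∀ i ∈ s, f i ≤ g (e i)) (hg : ∀ j ∈ t, 0 ≤ g j) :
    ∑ i ∈ s, f i ≤ ∑ j ∈ t, g j := by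
  classical
  calc ∑ i ∈ s, f i ≤ ∑ i ∈ s, g (e i) := sum_le_sum hfg
    _ = ∑ j ∈ s.image e, g j := (sum_image he).symm
    _ ≤ ∑ j ∈ t, g j :=
      sum_le_sum_of_subset_of_nonneg (image_subset_iff.2 hest) fun j hj _ ↦ hg j hj

theorem Antitone.sum_le_sum_of_pred_mem [LinearOrder ι] [PredOrder ι] {d : ι → M}
    {s t : Finset ι} (hd : Antitone d) (hnn : ∀ i ∈ t, 0 ≤ d i) (hs : ∀ i ∈ s, ¬IsMin i)
    (hst : ∀ i ∈ s, Order.pred i ∈ t) :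
    ∑ i ∈ s, d i ≤ ∑ i ∈ t, d i :=
  sum_le_sum_of_injOn_of_nonneg Order.pred
    (fun i hi j hj h ↦ (Order.pred_eq_pred_iff_of_not_isMin (hs i hi) (hs j hj)).1 h) hst
    (fun i _ ↦ hd (Order.pred_le i)) hnn

end OrderedSum

namespace Fin

theorem sum_filter_even_add_sum_filter_odd {M : Type*} [AddCommMonoid M] {m : ℕ}
    (d : Fin m → M) :
    ∑ i with Even i.val, d i + ∑ i with Odd i.val, d i = ∑ i, d i := by
  simpa only [Nat.not_even_iff_odd] using sum_filter_add_sum_filter_not univ (Even ·.val) d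

variable {M : Type*} [AddCommMonoid M] [PartialOrder M] [IsOrderedAddMonoid M] {m : ℕ}

theorem val_orderPred (i : Fin (m + 1)) : (Order.pred i).val = i.val - 1 := by
  cases i using Fin.cases <;> simp

theorem not_isMin_of_ne_zero {i : Fin (m + 1)} (hi : i ≠ 0) : ¬IsMin i := by
  rwa [isMin_iff_eq_bot, bot_eq_zero]

variable {d : Fin (m + 1) → M}

theorem sum_filter_odd_le_sum_filter_even (hd : Antitone d) (hnn : ∀ i, 0 ≤ d i) :
    ∑ i with Odd i.val, d i ≤ ∑ i with Even i.val, d i := by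
  refine hd.sum_le_sum_of_pred_mem (fun i _ ↦ hnn i) (fun i hi ↦ ?_) (fun i hi ↦ ?_)
  all_goals
    simp only [mem_filter, mem_univ, true_and] at hi ⊢
    have hi0 : i ≠ 0 := by rintro rfl; simp at hi
  · exact not_isMin_of_ne_zero hi0
  · rw [val_orderPred]
    exact Nat.Odd.sub_odd hi odd_one

theorem sum_filter_even_le_add_sum_filter_odd (hd : Antitone d) (hnn : ∀ i, 0 ≤ d i) :
    ∑ i with Even i.val, d i ≤ d 0 + ∑ i with Odd i.val, d i := by
  rw [← add_sum_erase {i | Even i.val} d (mem_filter.2 ⟨mem_univ 0, Even.zero⟩)]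
  refine add_le_add le_rfl (hd.sum_le_sum_of_pred_mem (fun i _ ↦ hnn i) (fun i hi ↦ ?_)
    (fun i hi ↦ ?_))
  all_goals simp only [mem_erase, mem_filter, mem_univ, true_and] at hi ⊢
  · exact not_isMin_of_ne_zero hi.1
  · rw [val_orderPred]
    exact Nat.Even.sub_odd (Nat.one_le_iff_ne_zero.2 (Fin.val_ne_zero_iff.2 hi.1)) hi.2 odd_one

end Fin

/-- Greedy balanced-partition lemma: if `d_0 ≥ d_1 ≥ ⋯ ≥ d_{p-1} ≥ 0` sum to at
least `b` and every element is at most `b/2`, then alternately partitioning the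
(sorted) indices into two sets yields at least `b/4` in each set. -/
theorem stmt_11 (p : ℕ) (b : ℝ) (d : Fin p → ℝ)
    (hnn : ∀ i, 0 ≤ d i)
    (hsorted : ∀ i j : Fin p, i ≤ j → d j ≤ d i)
    (hsum : b ≤ ∑ i, d i)
    (hsmall : ∀ i, d i ≤ b / 2) :
    b / 4 ≤ ∑ i ∈ Finset.univ.filter (fun i : Fin p => Even i.val), d i ∧
    b / 4 ≤ ∑ i ∈ Finset.univ.filter (fun i : Fin p => Odd i.val), d i := by
  cases p with
  | zero =>
    simp only [univ_eq_empty, filter_empty, sum_empty] at hsum ⊢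
    constructor <;> linarith
  | succ m =>
    have hsplit := Fin.sum_filter_even_add_sum_filter_odd d
    have hodd := Fin.sum_filter_odd_le_sum_filter_even hsorted hnn
    have heven := Fin.sum_filter_even_le_add_sum_filter_odd hsorted hnn
    have hd0 := hsmall 0
    constructor <;> linarith
end

section
/- For m ≥ 2 and 0 < ε < 1/2, consider the family of agents containing, for every ordered pair of distinct projects (j, j'), an agent demanding ε on j, 1−ε on j', and 0 elsewhere, plus for every unordered pair {j, j'} an agent demanding 1/2 on both j and j' and 0 elsewhere. Any x ∈ [0,∞)^m satisfying all these agents at threshold τ = m−1 has Σ_j x_j ≥ min(ε + (m−1)/2, (m−1)(1−ε)). -/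
lemma key_14 {m : ℕ} (hm : 2 ≤ m) (x d : Fin m → ℝ) (j j' : Fin m) (hjj : j ≠ j')
    (hcard : m - 1 ≤ (Finset.univ.filter fun k : Fin m => d k ≤ x k).card)
    (hd : ∀ k, k ≠ j → k ≠ j' → d k ≤ x k) : d j ≤ x j ∨ d j' ≤ x j' := by
  by_contra h
  push_neg at h
  obtain ⟨h1, h2⟩ := h
  have hsub : (Finset.univ.filter fun k : Fin m => d k ≤ x k) ⊆
      Finset.univ \ {j, j'} := by
    intro k hk
    simp only [Finset.mem_filter] at hk
    simp only [Finset.mem_sdiff, Finset.mem_univ, Finset.mem_insert,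
      Finset.mem_singleton, true_and]
    rintro (rfl | rfl)
    · exact absurd hk.2 (not_le.mpr h1)
    · exact absurd hk.2 (not_le.mpr h2)
  have hc : (Finset.univ \ ({j, j'} : Finset (Fin m))).card = m - 2 := by
    rw [Finset.card_sdiff_of_subset (by simp)]
    simp [Finset.card_insert_of_notMem, hjj]
  have := (Finset.card_le_card hsub).trans_eq hc
  omega

/-- Lower bound on the budget needed to satisfy, at threshold τ = m-1, the family of
agents consisting of, for every ordered pair of distinct projects `(j,j')`, an agent
demanding `ε` on `j` and `1-ε` on `j'`, and for every pair of distinct projects, an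
agent demanding `1/2` on both. -/
theorem stmt_14 (m : ℕ) (hm : 2 ≤ m) (ε : ℝ) (hε0 : 0 < ε) (hε1 : ε < 1 / 2)
    (x : Fin m → ℝ) (hx : ∀ j, 0 ≤ x j)
    (hhalf : ∀ j j' : Fin m, j ≠ j' →
      m - 1 ≤ (Finset.univ.filter fun k : Fin m =>
        (if k = j ∨ k = j' then (1 : ℝ) / 2 else 0) ≤ x k).card)
    (heps : ∀ j j' : Fin m, j ≠ j' →
      m - 1 ≤ (Finset.univ.filter fun k : Fin m =>
        (if k = j then ε else if k = j' then 1 - ε else 0) ≤ x k).card) :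
    min (ε + ((m : ℝ) - 1) / 2) (((m : ℝ) - 1) * (1 - ε)) ≤ ∑ j, x j := by
  have hcast : ((m - 1 : ℕ) : ℝ) = (m : ℝ) - 1 := by
    rw [Nat.cast_sub (by omega)]; simp
  have half' : ∀ j j' : Fin m, j ≠ j' → 1 / 2 ≤ x j ∨ 1 / 2 ≤ x j' := by
    intro j j' hjj
    have := key_14 hm x (fun k => if k = j ∨ k = j' then (1 : ℝ) / 2 else 0) j j' hjj
      (hhalf j j' hjj) (by intro k hk hk'; simp [hk, hk']; exact hx k)
    simpa using this
  have eps' : ∀ j j' : Fin m, j ≠ j' → ε ≤ x j ∨ 1 - ε ≤ x j' := by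
    intro j j' hjj
    have := key_14 hm x (fun k => if k = j then ε else if k = j' then 1 - ε else 0) j j' hjj
      (heps j j' hjj) (by intro k hk hk'; simp [hk, hk']; exact hx k)
    simpa [hjj.symm] using this
  by_cases hall : ∀ j, 1 / 2 ≤ x j
  · have hsum : (m : ℝ) * (1 / 2) ≤ ∑ j, x j := by
      calc (m : ℝ) * (1 / 2) = ∑ _j : Fin m, (1 : ℝ) / 2 := by
            rw [Finset.sum_const]; simp [mul_comm]
        _ ≤ ∑ j, x j := Finset.sum_le_sum fun j _ => hall j
    refine le_trans (min_le_left _ _) (le_trans ?_ hsum)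
    have : (1 : ℝ) ≤ (m : ℝ) := by exact_mod_cast (by omega : 1 ≤ m)
    nlinarith
  · push_neg at hall
    obtain ⟨j0, hj0⟩ := hall
    have hother : ∀ j, j ≠ j0 → 1 / 2 ≤ x j := by
      intro j hj
      rcases half' j j0 hj with h | h
      · exact h
      · exact absurd h (not_le.mpr hj0)
    have hsplit : ∑ j, x j = x j0 + ∑ j ∈ Finset.univ.erase j0, x j :=
      (Finset.add_sum_erase _ x (Finset.mem_univ j0)).symm
    have hcarde : (Finset.univ.erase j0).card = m - 1 := by
      rw [Finset.card_erase_of_mem (Finset.mem_univ j0)]; simp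
    by_cases hε' : ε ≤ x j0
    · refine le_trans (min_le_left _ _) ?_
      rw [hsplit]
      have : ((m : ℝ) - 1) / 2 ≤ ∑ j ∈ Finset.univ.erase j0, x j := by
        calc ((m : ℝ) - 1) / 2 = ∑ _j ∈ Finset.univ.erase j0, (1 : ℝ) / 2 := by
              rw [Finset.sum_const, hcarde, nsmul_eq_mul, hcast]; ring
          _ ≤ _ := Finset.sum_le_sum fun j hj => hother j (Finset.ne_of_mem_erase hj)
      linarith
    · refine le_trans (min_le_right _ _) ?_
      rw [hsplit]
      have : ((m : ℝ) - 1) * (1 - ε) ≤ ∑ j ∈ Finset.univ.erase j0, x j := by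
        calc ((m : ℝ) - 1) * (1 - ε) = ∑ _j ∈ Finset.univ.erase j0, (1 - ε) := by
              rw [Finset.sum_const, hcarde, nsmul_eq_mul, hcast]
          _ ≤ _ := Finset.sum_le_sum fun j hj => by
              rcases eps' j0 j (Finset.ne_of_mem_erase hj).symm with h | h
              · exact absurd h hε'
              · exact h
      have := hx j0
      linarith
end

section
/- Fix an odd m ≥ 3 and consider m agents on m projects where agent i's demand on project j is (1/2)^{((j−i) mod m)+1}, except her demand on project i is 1/2 + (1/2)^m. Then the demand vector of agent 1 dominates, at threshold τ = m/2 (i.e., coordinatewise domination on at least m/2 coordinates), exactly the agents i with i = 1 or i ≥ (m+3)/2, which is (m+1)/2 agents in total. -/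
/-- Tightness of the dictator guarantee: in the cyclic instance with odd `m ≥ 3`
agents/projects where agent `i` demands `1/2 + (1/2)^m` on project `i` and
`(1/2)^{((j-i) mod m)+1}` on each other project `j`, the demand vector of agent `0`
covers (on at least `m/2` coordinates) exactly the agents `k` with `k = 0` or
`k+1 ≥ (m+3)/2`, and these are `(m+1)/2` agents in total. -/
theorem stmt_17 (m : ℕ) (hm : 3 ≤ m) (hodd : Odd m)
    (d : Fin m → Fin m → ℝ)
    (hd : ∀ i j : Fin m, d i j =
      if j = i then 1 / 2 + (1 / 2 : ℝ) ^ m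
      else (1 / 2 : ℝ) ^ (((j : ℤ) - (i : ℤ)) % (m : ℤ)).toNat.succ) :
    (∀ k : Fin m,
      (m ≤ 2 * (Finset.univ.filter fun j => d k j ≤ d ⟨0, by omega⟩ j).card) ↔
        ((k : ℕ) = 0 ∨ m + 3 ≤ 2 * ((k : ℕ) + 1))) ∧
    2 * (Finset.univ.filter fun k : Fin m =>
      m ≤ 2 * (Finset.univ.filter fun j => d k j ≤ d ⟨0, by omega⟩ j).card).card = m + 1 := by
  have hm0 : 0 < m := by omega
  have emod_toNat : ∀ a b : ℕ, a < m → b < m →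
      ((((a:ℤ) - b) % (m:ℤ)).toNat = if b ≤ a then a - b else a + m - b) := by
    intro a b ha hb
    rcases le_or_gt b a with h | h
    · rw [if_pos h, Int.emod_eq_of_lt (by omega) (by push_cast; omega)]
      omega
    · rw [if_neg (by omega)]
      have h1 : ((a:ℤ) - b) % m = ((a:ℤ) - b + m * 1) % m :=
        (Int.add_mul_emod_self_left _ _ _).symm
      rw [h1, mul_one, Int.emod_eq_of_lt (by push_cast; omega) (by push_cast; omega)]
      omega
  have hp : ∀ s t : ℕ, ((1/2:ℝ)^s ≤ (1/2:ℝ)^t ↔ t ≤ s) := by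
    intro s t
    constructor
    · intro h; by_contra hc; push_neg at hc
      have := pow_lt_pow_right_of_lt_one₀ (by norm_num) (by norm_num : (1/2:ℝ) < 1) hc
      linarith
    · intro h; exact pow_le_pow_of_le_one (by norm_num) (by norm_num) h
  have hppos : ∀ s : ℕ, (0:ℝ) < (1/2:ℝ)^s := fun s => pow_pos (by norm_num) s
  have hpone : ((1/2:ℝ))^(1:ℕ) = 1/2 := pow_one _
  have hzcast : ((⟨0, hm0⟩ : Fin m) : ℤ) = ((0:ℕ) : ℤ) := rfl
  have key : ∀ k : Fin m,
      (Finset.univ.filter fun j => d k j ≤ d ⟨0, hm0⟩ j).card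
        = if (k:ℕ) = 0 then m else (k:ℕ) := by
    intro k
    by_cases hk : (k:ℕ) = 0
    · rw [if_pos hk]
      have hkz : k = ⟨0, hm0⟩ := Fin.ext hk
      subst hkz
      rw [Finset.filter_true_of_mem (fun j _ => le_refl _)]
      simp
    · rw [if_neg hk]
      have hkm := k.isLt
      have hiff : ∀ j : Fin m, (d k j ≤ d ⟨0, hm0⟩ j ↔ (j:ℕ) < (k:ℕ)) := by
        intro j
        rw [hd, hd]
        have hjm := j.isLt
        by_cases hj0 : j = ⟨0, hm0⟩
        · subst hj0
          rw [if_pos rfl, if_neg (by simp only [ne_eq, Fin.ext_iff, Fin.val_mk]; omega)]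
          have ht := emod_toNat 0 k hm0 hkm
          rw [if_neg (by omega)] at ht
          rw [hzcast, ht]
          have h1 : ((1/2:ℝ))^(Nat.succ (0 + m - (k:ℕ))) ≤ (1/2:ℝ)^(1:ℕ) :=
            (hp _ _).mpr (by omega)
          have h2 := hppos m
          rw [hpone] at h1
          constructor
          · intro _; simp only [Fin.val_mk]; omega
          · intro _; linarith
        · have ht2 := emod_toNat j 0 hjm hm0
          rw [if_pos (Nat.zero_le _)] at ht2
          by_cases hjk : j = k
          · subst hjk
            rw [if_pos rfl, if_neg hj0, hzcast, ht2]
            have h1 : ((1/2:ℝ))^(Nat.succ ((j:ℕ) - 0)) ≤ (1/2:ℝ)^(1:ℕ) :=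
              (hp _ _).mpr (by omega)
            have h2 := hppos m
            rw [hpone] at h1
            exact iff_of_false (by linarith) (by omega)
          · rw [if_neg hjk, if_neg hj0, hzcast, ht2,
              emod_toNat j k hjm hkm, hp]
            have hne : (j:ℕ) ≠ (k:ℕ) := fun h => hjk (Fin.ext h)
            split <;> omega
      calc (Finset.univ.filter fun j => d k j ≤ d ⟨0, hm0⟩ j).card
          = (Finset.Iio k).card := by
            congr 1
            ext j
            simp only [Finset.mem_filter, Finset.mem_univ, true_and, Finset.mem_Iio,
              hiff j, Fin.lt_def]
        _ = (k:ℕ) := Fin.card_Iio _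
  obtain ⟨t, ht⟩ := hodd
  constructor
  · intro k
    rw [key k]
    by_cases hk : (k:ℕ) = 0
    · rw [if_pos hk]
      exact iff_of_true (by omega) (Or.inl hk)
    · rw [if_neg hk]
      constructor
      · intro h; right; omega
      · intro h; rcases h with h | h <;> omega
  · have hc : t + 1 < m := by omega
    have hrw : (Finset.univ.filter fun k : Fin m =>
        m ≤ 2 * (Finset.univ.filter fun j => d k j ≤ d ⟨0, hm0⟩ j).card)
        = insert (⟨0, hm0⟩ : Fin m) (Finset.Ici (⟨t + 1, hc⟩ : Fin m)) := by
      ext k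
      rw [Finset.mem_filter, key k]
      simp only [Finset.mem_insert, Finset.mem_Ici, Finset.mem_univ, true_and,
        Fin.le_def, Fin.ext_iff, Fin.val_mk]
      split <;> omega
    rw [hrw, Finset.card_insert_of_notMem
        (by simp only [Finset.mem_Ici, Fin.le_def, Fin.val_mk]; omega),
      Fin.card_Ici]
    simp only [Fin.val_mk]
    omega
end

section
/- Let 0 < δ_i < δ_j < 1/6. Consider the 6 agents on 3 projects given by the cyclic shifts of (0.5+δ/2, 0.5−δ, δ/2) for δ ∈ {δ_i, δ_j}. Then there is no x ∈ [0,1]^3 with x₁+x₂+x₃ ≤ 1 that satisfies all 6 agents at threshold τ = 2 (i.e., x coordinatewise dominates at least 2 coordinates of each agent's demand vector). -/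
lemma two_of_three {p : Fin 3 → Prop} [DecidablePred p]
    (h : 2 ≤ (Finset.univ.filter p).card) :
    (p 0 ∧ p 1) ∨ (p 0 ∧ p 2) ∨ (p 1 ∧ p 2) := by
  rw [Finset.card_filter, Fin.sum_univ_three] at h
  by_cases h0 : p 0 <;> by_cases h1 : p 1 <;> by_cases h2 : p 2 <;> simp_all

lemma point_lemma (δ : ℝ) (hδ0 : 0 < δ) (hδ : δ < 1/6) (x : Fin 3 → ℝ)
    (hx0 : 0 ≤ x 0) (hx1 : 0 ≤ x 1) (hx2 : 0 ≤ x 2)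
    (hsum : x 0 + x 1 + x 2 ≤ 1)
    (hA : (1/2 + δ/2 ≤ x 0 ∧ 1/2 - δ ≤ x 1) ∨ (1/2 + δ/2 ≤ x 0 ∧ δ/2 ≤ x 2)
        ∨ (1/2 - δ ≤ x 1 ∧ δ/2 ≤ x 2))
    (hB : (δ/2 ≤ x 0 ∧ 1/2 + δ/2 ≤ x 1) ∨ (δ/2 ≤ x 0 ∧ 1/2 - δ ≤ x 2)
        ∨ (1/2 + δ/2 ≤ x 1 ∧ 1/2 - δ ≤ x 2))
    (hC : (1/2 - δ ≤ x 0 ∧ δ/2 ≤ x 1) ∨ (1/2 - δ ≤ x 0 ∧ 1/2 + δ/2 ≤ x 2)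
        ∨ (δ/2 ≤ x 1 ∧ 1/2 + δ/2 ≤ x 2)) :
    (1/2 + δ/2 ≤ x 0 ∧ δ/2 ≤ x 1 ∧ 1/2 - δ ≤ x 2) ∨
    (1/2 - δ ≤ x 0 ∧ 1/2 + δ/2 ≤ x 1 ∧ δ/2 ≤ x 2) ∨
    (δ/2 ≤ x 0 ∧ 1/2 - δ ≤ x 1 ∧ 1/2 + δ/2 ≤ x 2) := by
  rcases hA with ⟨a1, a2⟩ | ⟨a1, a2⟩ | ⟨a1, a2⟩ <;>
  rcases hB with ⟨b1, b2⟩ | ⟨b1, b2⟩ | ⟨b1, b2⟩ <;>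
  rcases hC with ⟨c1, c2⟩ | ⟨c1, c2⟩ | ⟨c1, c2⟩ <;>
  first
    | (exfalso; linarith)
    | (left; exact ⟨by linarith, by linarith, by linarith⟩)
    | (right; left; exact ⟨by linarith, by linarith, by linarith⟩)
    | (right; right; exact ⟨by linarith, by linarith, by linarith⟩)

/-- For `0 < δᵢ < δⱼ < 1/6`, no budget-feasible division of 3 projects satisfies,
at threshold τ = 2, all six agents obtained as the cyclic shifts of
`(0.5+δ/2, 0.5−δ, δ/2)` for `δ ∈ {δᵢ, δⱼ}`. -/
theorem stmt_18 (δi δj : ℝ) (h0 : 0 < δi) (hij : δi < δj) (hj : δj < 1 / 6) :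
    ¬ ∃ x : Fin 3 → ℝ, (∀ j, 0 ≤ x j ∧ x j ≤ 1) ∧ (∑ j, x j ≤ 1) ∧
      ∀ δ ∈ ({δi, δj} : Set ℝ),
        (2 ≤ (Finset.univ.filter fun j =>
          (![1/2 + δ/2, 1/2 - δ, δ/2] : Fin 3 → ℝ) j ≤ x j).card) ∧
        (2 ≤ (Finset.univ.filter fun j =>
          (![δ/2, 1/2 + δ/2, 1/2 - δ] : Fin 3 → ℝ) j ≤ x j).card) ∧
        (2 ≤ (Finset.univ.filter fun j =>
          (![1/2 - δ, δ/2, 1/2 + δ/2] : Fin 3 → ℝ) j ≤ x j).card) := by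
  rintro ⟨x, hx, hsum, hsat⟩
  rw [Fin.sum_univ_three] at hsum
  obtain ⟨hAi, hBi, hCi⟩ := hsat δi (Or.inl rfl)
  obtain ⟨hAj, hBj, hCj⟩ := hsat δj (Or.inr rfl)
  have conv : ∀ δ : ℝ, 0 < δ → δ < 1/6 →
      (2 ≤ (Finset.univ.filter fun j =>
        (![1/2 + δ/2, 1/2 - δ, δ/2] : Fin 3 → ℝ) j ≤ x j).card) →
      (2 ≤ (Finset.univ.filter fun j =>
        (![δ/2, 1/2 + δ/2, 1/2 - δ] : Fin 3 → ℝ) j ≤ x j).card) →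
      (2 ≤ (Finset.univ.filter fun j =>
        (![1/2 - δ, δ/2, 1/2 + δ/2] : Fin 3 → ℝ) j ≤ x j).card) →
      (1/2 + δ/2 ≤ x 0 ∧ δ/2 ≤ x 1 ∧ 1/2 - δ ≤ x 2) ∨
      (1/2 - δ ≤ x 0 ∧ 1/2 + δ/2 ≤ x 1 ∧ δ/2 ≤ x 2) ∨
      (δ/2 ≤ x 0 ∧ 1/2 - δ ≤ x 1 ∧ 1/2 + δ/2 ≤ x 2) := by
    intro δ hδ0 hδ hA hB hC
    have hA' := two_of_three hA
    have hB' := two_of_three hB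
    have hC' := two_of_three hC
    simp only [Matrix.cons_val_zero, Matrix.cons_val_one, Matrix.head_cons,
      Matrix.cons_val_two, Matrix.tail_cons] at hA' hB' hC'
    exact point_lemma δ hδ0 hδ x (hx 0).1 (hx 1).1 (hx 2).1 hsum hA' hB' hC'
  have Pi := conv δi h0 (by linarith) hAi hBi hCi
  have Pj := conv δj (by linarith) hj hAj hBj hCj
  rcases Pi with ⟨i1, i2, i3⟩ | ⟨i1, i2, i3⟩ | ⟨i1, i2, i3⟩ <;>
  rcases Pj with ⟨j1, j2, j3⟩ | ⟨j1, j2, j3⟩ | ⟨j1, j2, j3⟩ <;> linarith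
end

section
/- Let a, b, c ∈ [0,1]^m be three vectors, and for a pair (u,v) say u majorizes v if |{j : u_j ≥ v_j}| ≥ ⌈m/2⌉. If a majorizes b, b majorizes c, c majorizes a, a does not majorize c, c does not majorize b, and b does not majorize a, then there exists an index j with c_j > a_j > b_j. -/
/-- Key combinatorial step: if `a` majorizes `b`, `b` majorizes `c`, `c` majorizes `a`,
but not conversely (where `u` majorizes `v` when `u_j ≥ v_j` on at least `⌈m/2⌉`
coordinates), then some coordinate `j` has `c_j > a_j > b_j`. -/
theorem stmt_19 (m : ℕ) (a b c : Fin m → ℝ)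
    (ha : ∀ j, 0 ≤ a j ∧ a j ≤ 1) (hb : ∀ j, 0 ≤ b j ∧ b j ≤ 1)
    (hc : ∀ j, 0 ≤ c j ∧ c j ≤ 1)
    (hab : m ≤ 2 * (Finset.univ.filter fun j => b j ≤ a j).card)
    (hbc : m ≤ 2 * (Finset.univ.filter fun j => c j ≤ b j).card)
    (hca : m ≤ 2 * (Finset.univ.filter fun j => a j ≤ c j).card)
    (hnac : ¬ m ≤ 2 * (Finset.univ.filter fun j => c j ≤ a j).card)
    (hncb : ¬ m ≤ 2 * (Finset.univ.filter fun j => b j ≤ c j).card)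
    (hnba : ¬ m ≤ 2 * (Finset.univ.filter fun j => a j ≤ b j).card) :
    ∃ j, b j < a j ∧ a j < c j := by
  classical
  set S := Finset.univ.filter (fun j => b j < a j) with hS
  set T := Finset.univ.filter (fun j => a j < c j) with hT
  have hSsplit : S.card + (Finset.univ.filter fun j => a j ≤ b j).card = m := by
    have := Finset.card_filter_add_card_filter_not
      (s := (Finset.univ : Finset (Fin m))) (p := fun j => b j < a j)
    simpa [hS, not_lt, Finset.card_univ] using this
  have hTsplit : T.card + (Finset.univ.filter fun j => c j ≤ a j).card = m := by
    have := Finset.card_filter_add_card_filter_not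
      (s := (Finset.univ : Finset (Fin m))) (p := fun j => a j < c j)
    simpa [hT, not_lt, Finset.card_univ] using this
  have hsum : m < S.card + T.card := by omega
  have hunion : (S ∪ T).card ≤ m := by
    simpa [Finset.card_univ] using Finset.card_le_card (Finset.subset_univ (S ∪ T))
  have hinter : (S ∩ T).Nonempty := by
    rw [← Finset.card_pos]
    have := Finset.card_inter_add_card_union S T
    omega
  obtain ⟨j, hj⟩ := hinter
  simp only [hS, hT, Finset.mem_inter, Finset.mem_filter] at hj
  exact ⟨j, hj.1.2, hj.2.2⟩
end
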